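/- arXiv:2106.12216 — 4 statements merged into one kernel-verified Lean document; each statement's English description precedes it below -/
import Mathlib

section
/- Let P satisfy ⟨Px,x⟩ ≥ ⟨x,x⟩ for all x and let δ_t = exp((log t)P) for t > 0. Then for every x ∈ ℝⁿ and t ≥ 1 one has |δ_t x| ≥ t|x|, and for every x ∈ ℝⁿ and 0 < t ≤ 1 one has |δ_t x| ≤ t|x|. -/
/-!
With `u s = exp (s P) x`, the energy `f s = u s ⬝ᵥ u s` satisfies `f' = 2 ⟪P u, u⟫ ≥ 2 f`, so
`exp (-2 s) f s` is monotone. Comparing `s = log t` with `s = 0` gives `|δ_t x|² ≥ t² |x|²` for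
`t ≥ 1` and the reverse inequality for `t ≤ 1`.
-/

open Matrix

theorem HasDerivAt.dotProduct {ι 𝕜 : Type*} [Fintype ι] [NontriviallyNormedField 𝕜]
    {u v : 𝕜 → ι → 𝕜} {u' v' : ι → 𝕜} {s : 𝕜}
    (hu : HasDerivAt u u' s) (hv : HasDerivAt v v' s) :
    HasDerivAt (fun s => u s ⬝ᵥ v s) (u' ⬝ᵥ v s + u s ⬝ᵥ v') s := by
  rw [hasDerivAt_pi] at hu hv
  simp only [_root_.dotProduct, ← Finset.sum_add_distrib]
  exact HasDerivAt.fun_sum fun i _ => (hu i).fun_mul (hv i)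

theorem Real.monotone_exp_neg_mul_mul_of_mul_le_deriv {f f' : ℝ → ℝ} {c : ℝ}
    (hf : ∀ s, HasDerivAt f (f' s) s) (hc : ∀ s, c * f s ≤ f' s) :
    Monotone fun s => Real.exp (-(c * s)) * f s := by
  have hg : ∀ s, HasDerivAt (fun s => Real.exp (-(c * s)) * f s)
      (Real.exp (-(c * s)) * (f' s - c * f s)) s := fun s =>
    (((hasDerivAt_id s).const_mul c).neg.exp.mul (hf s)).congr_deriv
      (by simp only [Pi.neg_apply, id]; ring)
  refine monotone_of_deriv_nonneg (fun s => (hg s).differentiableAt) fun s => ?_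
  rw [(hg s).deriv]
  exact mul_nonneg (Real.exp_pos _).le (sub_nonneg.2 (hc s))

theorem Real.exp_mul_sqrt (s a : ℝ) : Real.exp s * √a = √(Real.exp (2 * s) * a) := by
  rw [Real.sqrt_mul (Real.exp_pos _).le, two_mul, Real.exp_add,
    Real.sqrt_mul_self (Real.exp_pos _).le]

namespace Matrix

variable {ι : Type*} [Fintype ι] [DecidableEq ι]

section

-- `NormedSpace.exp` depends only on the topology, so any matrix norm inducing it may be used.
attribute [local instance] Matrix.linftyOpNormedRing Matrix.linftyOpNormedAlgebra

theorem hasDerivAt_exp_smul_mulVec (P : Matrix ι ι ℝ) (x : ι → ℝ) (s : ℝ) :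
    HasDerivAt (fun s : ℝ => NormedSpace.exp (s • P) *ᵥ x)
      (P *ᵥ (NormedSpace.exp (s • P) *ᵥ x)) s := by
  let evalAt : Matrix ι ι ℝ →L[ℝ] ι → ℝ :=
    (LinearMap.applyₗ x ∘ₗ Matrix.toLin'.toLinearMap).toContinuousLinearMap
  rw [mulVec_mulVec]
  exact evalAt.hasFDerivAt.comp_hasDerivAt s (hasDerivAt_exp_smul_const' P s)

end

variable {P : Matrix ι ι ℝ}

theorem monotone_exp_neg_two_mul_mul_dotProduct_exp_smul_mulVec
    (hP : ∀ x : ι → ℝ, x ⬝ᵥ x ≤ P *ᵥ x ⬝ᵥ x) (x : ι → ℝ) :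
    Monotone fun s : ℝ => Real.exp (-(2 * s)) *
      (NormedSpace.exp (s • P) *ᵥ x ⬝ᵥ NormedSpace.exp (s • P) *ᵥ x) := by
  have hu := hasDerivAt_exp_smul_mulVec P x
  refine Real.monotone_exp_neg_mul_mul_of_mul_le_deriv (fun s => (hu s).dotProduct (hu s))
    fun s => ?_
  set u := NormedSpace.exp (s • P) *ᵥ x
  linarith [hP u, dotProduct_comm u (P *ᵥ u)]

theorem exp_mul_sqrt_dotProduct_le_of_nonneg (hP : ∀ x : ι → ℝ, x ⬝ᵥ x ≤ P *ᵥ x ⬝ᵥ x)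
    (x : ι → ℝ) {s : ℝ} (hs : 0 ≤ s) :
    Real.exp s * √(x ⬝ᵥ x) ≤
      √(NormedSpace.exp (s • P) *ᵥ x ⬝ᵥ NormedSpace.exp (s • P) *ᵥ x) := by
  have h := monotone_exp_neg_two_mul_mul_dotProduct_exp_smul_mulVec hP x hs
  simp only [mul_zero, neg_zero, Real.exp_zero, zero_smul, NormedSpace.exp_zero, one_mulVec,
    one_mul, Real.exp_neg] at h
  rw [Real.exp_mul_sqrt]
  exact Real.sqrt_le_sqrt ((le_inv_mul_iff₀ (Real.exp_pos _)).1 h)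

theorem sqrt_dotProduct_le_exp_mul_of_nonpos (hP : ∀ x : ι → ℝ, x ⬝ᵥ x ≤ P *ᵥ x ⬝ᵥ x)
    (x : ι → ℝ) {s : ℝ} (hs : s ≤ 0) :
    √(NormedSpace.exp (s • P) *ᵥ x ⬝ᵥ NormedSpace.exp (s • P) *ᵥ x) ≤
      Real.exp s * √(x ⬝ᵥ x) := by
  have h := monotone_exp_neg_two_mul_mul_dotProduct_exp_smul_mulVec hP x hs
  simp only [mul_zero, neg_zero, Real.exp_zero, zero_smul, NormedSpace.exp_zero, one_mulVec,
    one_mul, Real.exp_neg] at h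
  rw [Real.exp_mul_sqrt]
  exact Real.sqrt_le_sqrt ((inv_mul_le_iff₀ (Real.exp_pos _)).1 h)

end Matrix

/-- For `P` with `⟨Px,x⟩ ≥ ⟨x,x⟩` and `δ_t = exp((log t) P)`:
`|δ_t x| ≥ t |x|` for `t ≥ 1` and `|δ_t x| ≤ t |x|` for `0 < t ≤ 1`,
where `|v| = √(v ⬝ v)` is the Euclidean norm. -/
theorem dilation_norm_bounds (n : ℕ) (P : Matrix (Fin n) (Fin n) ℝ)
    (hP : ∀ x : Fin n → ℝ, x ⬝ᵥ x ≤ P.mulVec x ⬝ᵥ x)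
    (δ : ℝ → Matrix (Fin n) (Fin n) ℝ)
    (hδ : ∀ t, δ t = NormedSpace.exp (Real.log t • P)) :
    (∀ (x : Fin n → ℝ) (t : ℝ), 1 ≤ t →
      t * Real.sqrt (x ⬝ᵥ x) ≤ Real.sqrt ((δ t).mulVec x ⬝ᵥ (δ t).mulVec x)) ∧
    (∀ (x : Fin n → ℝ) (t : ℝ), 0 < t → t ≤ 1 →
      Real.sqrt ((δ t).mulVec x ⬝ᵥ (δ t).mulVec x) ≤ t * Real.sqrt (x ⬝ᵥ x)) := by
  refine ⟨fun x t ht => ?_, fun x t ht₀ ht₁ => ?_⟩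
  · have h := exp_mul_sqrt_dotProduct_le_of_nonneg hP x (Real.log_nonneg ht)
    rwa [Real.exp_log (by linarith), ← hδ] at h
  · have h := sqrt_dotProduct_le_exp_mul_of_nonpos hP x (Real.log_nonpos ht₀.le ht₁)
    rwa [Real.exp_log ht₀, ← hδ] at h
end

section
/- The norm function ρ associated with δ_t = t^P is subadditive: ρ(x+y) ≤ ρ(x) + ρ(y) for all x, y ∈ ℝⁿ, and symmetric: ρ(−x) = ρ(x). -/
/-!
For `x ≠ 0` the function `τ ↦ e^{-τ} ‖exp (τ • A) x‖` is monotone, since the derivative of its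
square is `2 e^{-2τ} (⟪A u, u⟫ - ‖u‖²) ≥ 0` with `u = exp (τ • A) x`. Hence `τ ↦ ‖exp (τ • A) x‖`
is strictly increasing, so `ρ x ≤ t ↔ ‖δ_{t⁻¹} x‖ ≤ 1`; and for `a ≤ s` the map
`δ_{s⁻¹} = δ_{a/s} δ_{a⁻¹}` shrinks `x` with `ρ x = a` to norm at most `a / s`. Taking
`a = ρ x`, `b = ρ y`, `s = a + b`, the triangle inequality gives `‖δ_{s⁻¹} (x + y)‖ ≤ 1`, that is
`ρ (x + y) ≤ s`. Symmetry holds because each `δ_t` is linear, so `‖δ_t (-x)‖ = ‖δ_t x‖`.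
-/

open Matrix NormedSpace WithLp
open scoped RealInnerProductSpace

section DilationFlow

variable {E : Type*} [NormedAddCommGroup E] [InnerProductSpace ℝ E] {A : E →L[ℝ] E}

variable (A) in
/-- `ρ x` is the `t > 0` with `‖δ_{t⁻¹} x‖ = 1`, for the dilations `δ_t = exp ((log t) • A)`. -/
def IsHomogeneousNorm (ρ : E → ℝ) : Prop :=
  ρ 0 = 0 ∧ ∀ x, x ≠ 0 → 0 < ρ x ∧ ‖exp ((-Real.log (ρ x)) • A) x‖ = 1

variable {ρ : E → ℝ}

namespace IsHomogeneousNorm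

theorem pos_iff (hρ : IsHomogeneousNorm A ρ) {x : E} : 0 < ρ x ↔ x ≠ 0 := by
  refine ⟨fun hx h0 => ?_, fun hx => (hρ.2 x hx).1⟩
  rw [h0, hρ.1] at hx
  exact lt_irrefl 0 hx

theorem nonneg (hρ : IsHomogeneousNorm A ρ) (x : E) : 0 ≤ ρ x := by
  rcases eq_or_ne x 0 with rfl | hx
  · exact hρ.1.ge
  · exact (hρ.2 x hx).1.le

end IsHomogeneousNorm

variable [CompleteSpace E]

variable (A) in
theorem exp_add_smul_apply (σ τ : ℝ) (x : E) :
    exp ((σ + τ) • A) x = exp (σ • A) (exp (τ • A) x) := by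
  -- `exp_add_of_commute` is stated for `ℚ`-algebras, an instance `E →L[ℝ] E` does not carry
  let : NormedAlgebra ℚ (E →L[ℝ] E) := NormedAlgebra.restrictScalars ℚ ℝ _
  rw [add_smul, exp_add_of_commute (((Commute.refl A).smul_left σ).smul_right τ)]
  rfl

variable (A) in
theorem exp_smul_apply_ne_zero (τ : ℝ) {x : E} (hx : x ≠ 0) :
    exp (τ • A) x ≠ 0 := by
  intro h
  have := exp_add_smul_apply A (-τ) τ x
  rw [neg_add_cancel, zero_smul, exp_zero, h, map_zero] at this
  exact hx this

variable (A) in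
theorem hasDerivAt_exp_smul_apply (x : E) (τ : ℝ) :
    HasDerivAt (fun τ : ℝ => exp (τ • A) x) (A (exp (τ • A) x)) τ := by
  simpa using (hasDerivAt_exp_smul_const' A τ).clm_apply (hasDerivAt_const τ x)

theorem monotone_exp_neg_mul_norm_exp_smul_apply (hA : ∀ x, ‖x‖ ^ 2 ≤ ⟪A x, x⟫) (x : E) :
    Monotone fun τ : ℝ => Real.exp (-τ) * ‖exp (τ • A) x‖ := by
  set u := fun τ : ℝ => exp (τ • A) x
  have hderiv : ∀ τ, HasDerivAt (fun τ => Real.exp (-τ) ^ 2 * ‖u τ‖ ^ 2)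
      (Real.exp (-τ) ^ 2 * (2 * (⟪A (u τ), u τ⟫ - ‖u τ‖ ^ 2))) τ := by
    intro τ
    refine (((hasDerivAt_neg τ).exp.fun_pow 2).mul
      (hasDerivAt_exp_smul_apply A x τ).norm_sq).congr_deriv ?_
    rw [real_inner_comm]
    ring
  have hsq : Monotone fun τ => (Real.exp (-τ) * ‖u τ‖) ^ 2 := by
    simp_rw [mul_pow]
    refine monotone_of_hasDerivAt_nonneg hderiv fun τ => ?_
    have := hA (u τ)
    dsimp only
    positivity
  intro σ τ hστ
  exact (pow_le_pow_iff_left₀ (by positivity) (by positivity) two_ne_zero).1 (hsq hστ)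

theorem norm_exp_smul_apply_le (hA : ∀ x, ‖x‖ ^ 2 ≤ ⟪A x, x⟫) (x : E) {τ : ℝ} (hτ : τ ≤ 0) :
    ‖exp (τ • A) x‖ ≤ Real.exp τ * ‖x‖ := by
  have h := monotone_exp_neg_mul_norm_exp_smul_apply hA x hτ
  simp only [neg_zero, Real.exp_zero, zero_smul, exp_zero, one_mul] at h
  rw [Real.exp_neg, inv_mul_le_iff₀ (Real.exp_pos τ)] at h
  exact h

theorem strictMono_norm_exp_smul_apply (hA : ∀ x, ‖x‖ ^ 2 ≤ ⟪A x, x⟫) {x : E} (hx : x ≠ 0) :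
    StrictMono fun τ : ℝ => ‖exp (τ • A) x‖ := by
  intro σ τ hστ
  have hmono := monotone_exp_neg_mul_norm_exp_smul_apply hA x hστ.le
  have hpos := norm_pos_iff.2 (exp_smul_apply_ne_zero A τ hx)
  have hexp : Real.exp (-τ) < Real.exp (-σ) := Real.exp_lt_exp.2 (neg_lt_neg hστ)
  dsimp only at hmono ⊢
  nlinarith [Real.exp_pos (-σ)]

namespace IsHomogeneousNorm

theorem le_iff_norm_exp_smul_apply_le_one (hρ : IsHomogeneousNorm A ρ)
    (hA : ∀ x, ‖x‖ ^ 2 ≤ ⟪A x, x⟫) {x : E} (hx : x ≠ 0) {t : ℝ} (ht : 0 < t) :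
    ρ x ≤ t ↔ ‖exp ((-Real.log t) • A) x‖ ≤ 1 := by
  rw [← (hρ.2 x hx).2, (strictMono_norm_exp_smul_apply hA hx).le_iff_le, neg_le_neg_iff,
    Real.log_le_log_iff (hρ.2 x hx).1 ht]

theorem norm_exp_smul_apply_le_div (hρ : IsHomogeneousNorm A ρ)
    (hA : ∀ x, ‖x‖ ^ 2 ≤ ⟪A x, x⟫) (x : E) {s : ℝ} (hs : 0 < s) (hxs : ρ x ≤ s) :
    ‖exp ((-Real.log s) • A) x‖ ≤ ρ x / s := by
  rcases eq_or_ne x 0 with rfl | hx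
  · simp [hρ.1]
  obtain ⟨hρx, hnorm⟩ := hρ.2 x hx
  have hτ : Real.log (ρ x) - Real.log s ≤ 0 := sub_nonpos.2 (Real.log_le_log hρx hxs)
  calc ‖exp ((-Real.log s) • A) x‖
      = ‖exp ((Real.log (ρ x) - Real.log s) • A) (exp ((-Real.log (ρ x)) • A) x)‖ := by
        rw [← exp_add_smul_apply]; ring_nf
    _ ≤ Real.exp (Real.log (ρ x) - Real.log s) := by
        simpa only [hnorm, mul_one] using
          norm_exp_smul_apply_le hA (exp ((-Real.log (ρ x)) • A) x) hτ
    _ = ρ x / s := by rw [Real.exp_sub, Real.exp_log hρx, Real.exp_log hs]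

theorem add_le (hρ : IsHomogeneousNorm A ρ) (hA : ∀ x, ‖x‖ ^ 2 ≤ ⟪A x, x⟫) (x y : E) :
    ρ (x + y) ≤ ρ x + ρ y := by
  rcases eq_or_ne (x + y) 0 with hxy | hxy
  · rw [hxy, hρ.1]
    exact add_nonneg (hρ.nonneg x) (hρ.nonneg y)
  have hs : 0 < ρ x + ρ y := by
    rcases eq_or_ne x 0 with rfl | hx
    · rw [zero_add] at hxy
      rw [hρ.1, zero_add]
      exact hρ.pos_iff.2 hxy
    · exact add_pos_of_pos_of_nonneg (hρ.pos_iff.2 hx) (hρ.nonneg y)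
  rw [hρ.le_iff_norm_exp_smul_apply_le_one hA hxy hs, map_add]
  calc _ ≤ ρ x / (ρ x + ρ y) + ρ y / (ρ x + ρ y) :=
        (norm_add_le _ _).trans <| add_le_add
          (hρ.norm_exp_smul_apply_le_div hA x hs (le_add_of_nonneg_right (hρ.nonneg y)))
          (hρ.norm_exp_smul_apply_le_div hA y hs (le_add_of_nonneg_left (hρ.nonneg x)))
    _ = 1 := by rw [← add_div, div_self hs.ne']

theorem neg (hρ : IsHomogeneousNorm A ρ) (hA : ∀ x, ‖x‖ ^ 2 ≤ ⟪A x, x⟫) (x : E) :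
    ρ (-x) = ρ x := by
  rcases eq_or_ne x 0 with rfl | hx
  · rw [neg_zero]
  have hle_iff : ∀ t, 0 < t → (ρ (-x) ≤ t ↔ ρ x ≤ t) := fun t ht => by
    rw [hρ.le_iff_norm_exp_smul_apply_le_one hA (neg_ne_zero.2 hx) ht,
      hρ.le_iff_norm_exp_smul_apply_le_one hA hx ht, map_neg, norm_neg]
  exact le_antisymm ((hle_iff _ (hρ.pos_iff.2 hx)).2 le_rfl)
    ((hle_iff _ (hρ.pos_iff.2 (neg_ne_zero.2 hx))).1 le_rfl)

end IsHomogeneousNorm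

end DilationFlow

namespace Matrix

variable {ι : Type*} [Fintype ι] [DecidableEq ι]

theorem toEuclideanCLM_exp {𝕜 : Type*} [RCLike 𝕜] (M : Matrix ι ι 𝕜) :
    toEuclideanCLM (𝕜 := 𝕜) (exp M) = exp (toEuclideanCLM (𝕜 := 𝕜) M) := by
  open scoped Matrix.Norms.L2Operator in
  exact map_exp_of_mem_ball (𝕂 := 𝕜) toEuclideanCLM
    (toEuclideanCLM (n := ι) (𝕜 := 𝕜)).toAlgEquiv.toLinearMap.continuous_of_finiteDimensional M
    (by rw [expSeries_radius_eq_top]; exact edist_lt_top _ _)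

theorem exp_mulVec {𝕜 : Type*} [RCLike 𝕜] (M : Matrix ι ι 𝕜) (x : ι → 𝕜) :
    exp M *ᵥ x = ofLp (exp (toEuclideanCLM (𝕜 := 𝕜) M) (toLp 2 x)) := by
  rw [← toEuclideanCLM_exp, ofLp_toEuclideanCLM]

theorem norm_sq_le_inner_toEuclideanCLM {P : Matrix ι ι ℝ}
    (hP : ∀ x : ι → ℝ, x ⬝ᵥ x ≤ P *ᵥ x ⬝ᵥ x) (u : EuclideanSpace ℝ ι) :
    ‖u‖ ^ 2 ≤ ⟪toEuclideanCLM (𝕜 := ℝ) P u, u⟫ := by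
  rw [real_inner_comm, inner_toEuclideanCLM, ← real_inner_self_eq_norm_sq, dotProduct_comm,
    EuclideanSpace.inner_eq_star_dotProduct, star_trivial]
  exact hP (ofLp u)

end Matrix

/-- The norm function `ρ` associated with `δ_t = exp((log t)P)` is subadditive
and symmetric: `ρ(x+y) ≤ ρ x + ρ y` and `ρ(-x) = ρ x`. -/
theorem rho_subadditive_symmetric (n : ℕ) (P : Matrix (Fin n) (Fin n) ℝ)
    (hP : ∀ x : Fin n → ℝ, x ⬝ᵥ x ≤ P.mulVec x ⬝ᵥ x)
    (δ : ℝ → Matrix (Fin n) (Fin n) ℝ)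
    (hδ : ∀ t, δ t = NormedSpace.exp (Real.log t • P))
    (ρ : (Fin n → ℝ) → ℝ) (hρ0 : ρ 0 = 0)
    (hρ : ∀ x : Fin n → ℝ, x ≠ 0 → 0 < ρ x ∧
      Real.sqrt ((δ (ρ x)⁻¹).mulVec x ⬝ᵥ (δ (ρ x)⁻¹).mulVec x) = 1) :
    (∀ x y : Fin n → ℝ, ρ (x + y) ≤ ρ x + ρ y) ∧ (∀ x : Fin n → ℝ, ρ (-x) = ρ x) := by
  set L := toEuclideanCLM (𝕜 := ℝ) P
  have hL := Matrix.norm_sq_le_inner_toEuclideanCLM hP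
  have hρL : IsHomogeneousNorm L (ρ ∘ ofLp) := by
    refine ⟨hρ0, fun u hu => ?_⟩
    obtain ⟨hpos, hnorm⟩ := hρ (ofLp u) (by simpa using hu)
    refine ⟨hpos, ?_⟩
    have hmul : δ (ρ (ofLp u))⁻¹ *ᵥ ofLp u
        = ofLp (exp ((-Real.log (ρ (ofLp u))) • L) u) := by
      rw [hδ, Real.log_inv, Matrix.exp_mulVec, map_smul, toLp_ofLp]
    rw [norm_eq_sqrt_real_inner, EuclideanSpace.inner_eq_star_dotProduct, star_trivial]
    rwa [hmul] at hnorm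
  exact ⟨fun x y => hρL.add_le hL (toLp 2 x) (toLp 2 y), fun x => hρL.neg hL (toLp 2 x)⟩
end

section
/- Let Φ be a bounded compactly supported function on ℝⁿ with ∫Φ = 1 and ∫ x^a Φ(x)dx = 0 for all multi-indices a with |a| = 1. Define K^{(k)}(x) = −Σ_{j=1}^k (−1)^j C(k,j) Φ^{(j)}(x), where Φ^{(j)} is the j-fold convolution of Φ with itself. Then ∫ K^{(k)}(x)dx = 1 and ∫ x^a K^{(k)}(x)dx = 0 for all multi-indices a with 1 ≤ |a| ≤ 2k − 1. -/
/-!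
Write `m_j(a)` for the `a`-th moment of `Φ^{(j)}`, with `Φ^{(0)} = δ`. Expanding
`x^a = (y + (x - y))^a` binomially under the convolution integral gives
`m_{j+1}(a) = ∑_{b ≤ a} C(a,b) m_j(b) m_1(a - b)`. As `m_1(0) = 1` and `m_1(c) = 0` for `|c| = 1`,
the forward difference in `j` of `m_j(a)` is a combination of the sequences `m_j(b)` with
`|b| ≤ |a| - 2`, so its `k`-th iterate vanishes once `|a| < 2k`. That is
`∑_{j=0}^k (-1)^j C(k,j) m_j(a) = 0`, which says that the `a`-th moment of `K^{(k)}` is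
`m_0(a) = δ_{a,0}`.
-/

open MeasureTheory Finset

/-- `convPow Φ j` is the `(j+1)`-fold self-convolution `Φ^{(j+1)}` of `Φ`
(so `convPow Φ 0 = Φ`). -/
noncomputable def convPow {n : ℕ} (Φ : (Fin n → ℝ) → ℝ) : ℕ → (Fin n → ℝ) → ℝ
  | 0 => Φ
  | j + 1 => fun x => ∫ y : Fin n → ℝ, convPow Φ j y * Φ (x - y)

/-- `K^{(k)} = -∑_{j=1}^k (-1)^j C(k,j) Φ^{(j)}`. -/
noncomputable def Kkernel {n : ℕ} (Φ : (Fin n → ℝ) → ℝ) (k : ℕ) :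
    (Fin n → ℝ) → ℝ :=
  fun x => -∑ j ∈ Finset.Icc 1 k, (-1 : ℝ) ^ j * (k.choose j) * convPow Φ (j - 1) x

open scoped Convolution

theorem fwdDiff_iter_eq_zero_of_weight_lt {M G ι R : Type*} [AddCommMonoid M] [AddCommGroup G]
    [Monoid R] [DistribMulAction R G] {h : M} (w : ι → ℕ) (d : ℕ) {u : ι → M → G}
    {S : ι → Finset ι} {c : ι → ι → R} (hS : ∀ i, ∀ j ∈ S i, w j + d ≤ w i)
    (hu : ∀ i, fwdDiff h (u i) = ∑ j ∈ S i, c i j • u j) {k : ℕ} {i : ι} (hi : w i < d * k) :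
    (fwdDiff h)^[k] (u i) = 0 := by
  induction k generalizing i with
  | zero => simp at hi
  | succ k ih =>
    rw [Function.iterate_succ_apply, hu, fwdDiff_iter_finsetSum]
    refine sum_eq_zero fun j hj => ?_
    have hwj : w j < d * k := by have := hS i j hj; rw [mul_add_one] at hi; omega
    rw [fwdDiff_iter_const_smul, ih hwj, smul_zero]

theorem alternating_choose_sum_eq_zero_of_fwdDiff_iter {G : Type*} [AddCommGroup G] {u : ℕ → G}
    {k : ℕ} (h : (fwdDiff 1)^[k] u 0 = 0) :
    ∑ j ∈ range (k + 1), ((-1 : ℤ) ^ j * k.choose j) • u j = 0 := by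
  rw [fwdDiff_iter_eq_sum_shift] at h
  have := congrArg (((-1 : ℤ) ^ k) • ·) h
  simp only [smul_zero, smul_sum, smul_smul] at this
  rw [← this]
  refine sum_congr rfl fun j hj => ?_
  have hj : j ≤ k := Nat.lt_succ_iff.mp (mem_range.mp hj)
  obtain ⟨m, rfl⟩ := Nat.exists_eq_add_of_le hj
  rw [Nat.add_sub_cancel_left, zero_add, smul_eq_mul, mul_one, pow_add, mul_assoc,
    ← mul_assoc ((-1) ^ m), ← mul_pow]
  norm_num

def monomial {ι R : Type*} [Fintype ι] [CommMonoid R] (a : ι → ℕ) (x : ι → R) : R :=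
  ∏ i, x i ^ a i

section Monomial

variable {ι R : Type*} [Fintype ι]

@[simp]
theorem monomial_zero [CommMonoid R] (x : ι → R) : monomial 0 x = 1 := by
  simp [monomial]

theorem continuous_monomial [CommMonoid R] [TopologicalSpace R] [ContinuousMul R] (a : ι → ℕ) :
    Continuous (monomial a : (ι → R) → R) :=
  continuous_finsetProd _ fun i _ => (continuous_apply i).pow _

theorem monomial_add [DecidableEq ι] [CommSemiring R] (a : ι → ℕ) (y z : ι → R) :
    monomial a (y + z) =
      ∑ b ∈ Iic a, (∏ i, ((a i).choose (b i) : R)) * (monomial b y * monomial (a - b) z) := by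
  simp_rw [monomial, Pi.add_apply, add_pow, prod_univ_sum, Nat.range_succ_eq_Iic]
  refine sum_congr rfl fun b _ => ?_
  simp only [prod_mul_distrib, Pi.sub_apply]
  ring

end Monomial

theorem MeasureTheory.Integrable.continuous_mul_of_hasCompactSupport {X : Type*}
    [TopologicalSpace X] [T2Space X] [MeasurableSpace X] [OpensMeasurableSpace X]
    [SecondCountableTopologyEither X ℝ]
    {μ : Measure X} {f g : X → ℝ} (hg : Continuous g) (hf : Integrable f μ)
    (hfs : HasCompactSupport f) : Integrable (fun x => g x * f x) μ :=
  (integrableOn_iff_integrable_of_support_subset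
      ((Function.support_mul_subset_right g f).trans (subset_tsupport f))).1
    (hf.integrableOn.continuousOn_mul hg.continuousOn hfs.isCompact)

theorem HasCompactSupport.integrable_of_bounded {X : Type*} [TopologicalSpace X]
    [MeasurableSpace X] {μ : Measure X} [IsFiniteMeasureOnCompacts μ] {f : X → ℝ}
    (hf : AEStronglyMeasurable f μ) (hfs : HasCompactSupport f) {M : ℝ} (hM : ∀ x, |f x| ≤ M) :
    Integrable f μ :=
  (integrableOn_iff_integrable_of_support_subset (subset_tsupport f)).1 <|
    Measure.integrableOn_of_bounded hfs.isCompact.measure_lt_top.ne hf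
      (Filter.Eventually.of_forall hM)

open ContinuousLinearMap in
theorem integral_monomial_mul_convolution {ι : Type*} [Fintype ι] [DecidableEq ι]
    {f g : (ι → ℝ) → ℝ} {a : ι → ℕ}
    (hf : ∀ b ≤ a, Integrable (fun x => monomial b x * f x))
    (hg : ∀ b ≤ a, Integrable (fun x => monomial b x * g x)) :
    ∫ x, monomial a x * (f ⋆[mul ℝ ℝ] g) x =
      ∑ b ∈ Iic a, (∏ i, ((a i).choose (b i) : ℝ)) *
        ((∫ y, monomial b y * f y) * ∫ z, monomial (a - b) z * g z) := by
  set F := fun b (y : ι → ℝ) => monomial b y * f y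
  set G := fun b (z : ι → ℝ) => monomial (a - b) z * g z
  have hexists : ∀ᵐ x, ∀ b ∈ Iic a, ConvolutionExistsAt (F b) (G b) x (mul ℝ ℝ) :=
    (Filter.eventually_all_finset _).2 fun b hb =>
      (hf b (mem_Iic.1 hb)).ae_convolution_exists _ (hg _ tsub_le_self)
  have hexpand : (fun x => monomial a x * (f ⋆[mul ℝ ℝ] g) x) =ᵐ[volume]
      fun x => ∑ b ∈ Iic a, (∏ i, ((a i).choose (b i) : ℝ)) * (F b ⋆[mul ℝ ℝ] G b) x := by
    filter_upwards [hexists] with x hFG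
    simp only [convolution_def, ← integral_const_mul]
    rw [← integral_finsetSum _ fun b hb => (hFG b hb).integrable.const_mul _]
    congr 1 with y
    rw [show monomial a x = monomial a (y + (x - y)) by rw [add_sub_cancel], monomial_add, sum_mul]
    exact sum_congr rfl fun b _ => by simp only [F, G, mul_apply']; ring
  rw [integral_congr_ae hexpand, integral_finsetSum _ fun b hb =>
    (((hf b (mem_Iic.1 hb)).integrable_convolution _ (hg _ tsub_le_self)).const_mul _)]
  refine sum_congr rfl fun b hb => ?_
  rw [integral_const_mul, integral_convolution _ (hf b (mem_Iic.1 hb)) (hg _ tsub_le_self),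
    mul_apply']

/-- The `a`-th moment of `Φ^{(j)} = convPow Φ (j - 1)`, where `Φ^{(0)}` is the Dirac mass at the
origin. -/
noncomputable def convPowMoment {n : ℕ} (Φ : (Fin n → ℝ) → ℝ) : ℕ → (Fin n → ℕ) → ℝ
  | 0, a => if a = 0 then 1 else 0
  | j + 1, a => ∫ x, monomial a x * convPow Φ j x

section ConvPow

variable {n : ℕ} {Φ : (Fin n → ℝ) → ℝ}

theorem convPow_succ_eq_convolution (Φ : (Fin n → ℝ) → ℝ) (j : ℕ) :
    convPow Φ (j + 1) = convPow Φ j ⋆[ContinuousLinearMap.mul ℝ ℝ] Φ := by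
  ext x
  simp [convPow, convolution_def]

theorem integrable_convPow (hΦ : Integrable Φ) (j : ℕ) : Integrable (convPow Φ j) := by
  induction j with
  | zero => exact hΦ
  | succ j ih => rw [convPow_succ_eq_convolution]; exact ih.integrable_convolution _ hΦ

theorem hasCompactSupport_convPow (hΦs : HasCompactSupport Φ) (j : ℕ) :
    HasCompactSupport (convPow Φ j) := by
  induction j with
  | zero => exact hΦs
  | succ j ih => rw [convPow_succ_eq_convolution]; exact ih.convolution _ hΦs

theorem integrable_monomial_mul_convPow (hΦ : Integrable Φ) (hΦs : HasCompactSupport Φ)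
    (a : Fin n → ℕ) (j : ℕ) : Integrable (fun x => monomial a x * convPow Φ j x) :=
  (integrable_convPow hΦ j).continuous_mul_of_hasCompactSupport (continuous_monomial a)
    (hasCompactSupport_convPow hΦs j)

theorem convPowMoment_succ (hΦ : Integrable Φ) (hΦs : HasCompactSupport Φ) (j : ℕ)
    (a : Fin n → ℕ) :
    convPowMoment Φ (j + 1) a = ∑ b ∈ Iic a, (∏ i, ((a i).choose (b i) : ℝ)) *
      (convPowMoment Φ j b * convPowMoment Φ 1 (a - b)) := by
  cases j with
  | zero =>
    rw [sum_eq_single_of_mem 0 (mem_Iic.2 zero_le) fun b _ hb => by simp [convPowMoment, hb]]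
    simp [convPowMoment]
  | succ j =>
    rw [convPowMoment, convPow_succ_eq_convolution]
    exact integral_monomial_mul_convolution
      (fun b _ => integrable_monomial_mul_convPow hΦ hΦs b j)
      (fun b _ => integrable_monomial_mul_convPow hΦ hΦs b 0)

end ConvPow

section Moments

variable {n : ℕ} {Φ : (Fin n → ℝ) → ℝ} (hΦ : Integrable Φ) (hΦs : HasCompactSupport Φ)
  (hint : ∫ x, Φ x = 1) (hmom1 : ∀ c : Fin n → ℕ, ∑ i, c i = 1 → ∫ x, monomial c x * Φ x = 0)
include hΦ hΦs hint hmom1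

theorem fwdDiff_convPowMoment (a : Fin n → ℕ) :
    fwdDiff 1 (convPowMoment Φ · a) =
      ∑ b ∈ (Iic a).filter (fun b => 2 ≤ ∑ i, (a - b) i),
        ((∏ i, ((a i).choose (b i) : ℝ)) * convPowMoment Φ 1 (a - b)) • (convPowMoment Φ · b) := by
  ext j
  have hlow : ∑ b ∈ (Iic a).filter (fun b => ¬ 2 ≤ ∑ i, (a - b) i),
      (∏ i, ((a i).choose (b i) : ℝ)) * (convPowMoment Φ j b * convPowMoment Φ 1 (a - b)) =
        convPowMoment Φ j a := by
    rw [sum_eq_single_of_mem a (by simp) fun b hb hba => ?_]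
    · simp [convPowMoment, convPow, hint]
    obtain ⟨hba', hsum⟩ := mem_filter.1 hb
    have hne : ∑ i, (a - b) i ≠ 0 := fun h0 =>
      hba (le_antisymm (mem_Iic.1 hba') fun i =>
        Nat.sub_eq_zero_iff_le.1 (sum_eq_zero_iff.1 h0 i (mem_univ i)))
    rw [convPowMoment, convPow, hmom1 _ (by omega), mul_zero, mul_zero]
  rw [fwdDiff, convPowMoment_succ hΦ hΦs, ← sum_filter_add_sum_filter_not _
    (fun b => 2 ≤ ∑ i, (a - b) i), hlow, add_sub_cancel_right, Finset.sum_apply]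
  refine sum_congr rfl fun b _ => ?_
  simp only [Pi.smul_apply, smul_eq_mul]
  ring

theorem sum_range_alternating_convPowMoment_eq_zero {k : ℕ} {a : Fin n → ℕ}
    (ha : ∑ i, a i < 2 * k) :
    ∑ j ∈ range (k + 1), ((-1 : ℤ) ^ j * k.choose j) • convPowMoment Φ j a = 0 := by
  refine alternating_choose_sum_eq_zero_of_fwdDiff_iter ?_
  have hdrop : ∀ a : Fin n → ℕ, ∀ b ∈ (Iic a).filter (fun b => 2 ≤ ∑ i, (a - b) i),
      ∑ i, b i + 2 ≤ ∑ i, a i := fun a b hb => by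
    obtain ⟨hba, hsum⟩ := mem_filter.1 hb
    have hle : ∀ i ∈ univ, b i ≤ a i := fun i _ => mem_Iic.1 hba i
    simp only [Pi.sub_apply, sum_tsub_distrib _ hle] at hsum
    omega
  rw [fwdDiff_iter_eq_zero_of_weight_lt (fun a => ∑ i, a i) 2 hdrop
    (fwdDiff_convPowMoment hΦ hΦs hint hmom1) ha, Pi.zero_apply]

end Moments

theorem integral_monomial_mul_Kkernel {n k : ℕ} {Φ : (Fin n → ℝ) → ℝ} (hΦ : Integrable Φ)
    (hΦs : HasCompactSupport Φ) (a : Fin n → ℕ) :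
    ∫ x, monomial a x * Kkernel Φ k x =
      -∑ j ∈ Icc 1 k, (-1 : ℝ) ^ j * k.choose j * convPowMoment Φ j a := by
  simp only [Kkernel, mul_neg, mul_sum, integral_neg, mul_left_comm (monomial a _)]
  rw [integral_finsetSum _ fun j _ =>
    (integrable_monomial_mul_convPow hΦ hΦs a (j - 1)).const_mul ((-1 : ℝ) ^ j * k.choose j)]
  refine congrArg _ (sum_congr rfl fun j hj => ?_)
  obtain ⟨i, rfl⟩ := Nat.exists_eq_add_of_le' (mem_Icc.1 hj).1
  rw [integral_const_mul]
  rfl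

theorem integral_monomial_mul_Kkernel_of_sum_lt {n k : ℕ} {Φ : (Fin n → ℝ) → ℝ}
    (hΦ : Integrable Φ) (hΦs : HasCompactSupport Φ) (hint : ∫ x, Φ x = 1)
    (hmom1 : ∀ c : Fin n → ℕ, ∑ i, c i = 1 → ∫ x, monomial c x * Φ x = 0)
    {a : Fin n → ℕ} (ha : ∑ i, a i < 2 * k) :
    ∫ x, monomial a x * Kkernel Φ k x = if a = 0 then 1 else 0 := by
  have h := sum_range_alternating_convPowMoment_eq_zero hΦ hΦs hint hmom1 ha
  rw [← Nat.Ico_zero_eq_range, Ico_add_one_right_eq_Icc, ← insert_Icc_add_one_left_eq_Icc zero_le,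
    sum_insert (by simp), zero_add] at h
  simp only [zsmul_eq_mul, pow_zero, Nat.choose_zero_right, one_mul] at h
  push_cast at h
  rw [integral_monomial_mul_Kkernel hΦ hΦs]
  change _ = convPowMoment Φ 0 a
  linarith

/-- If `Φ` is bounded, compactly supported, with `∫ Φ = 1` and vanishing first
moments, then `∫ K^{(k)} = 1` and all moments of `K^{(k)}` of order `1 ≤ |a| ≤ 2k-1`
vanish. -/
theorem kernel_moments (n k : ℕ) (hk : 1 ≤ k) (Φ : (Fin n → ℝ) → ℝ)
    (hmeas : Measurable Φ) (hbd : ∃ M, ∀ x, |Φ x| ≤ M) (hsupp : HasCompactSupport Φ)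
    (hint : ∫ x : Fin n → ℝ, Φ x = 1)
    (hmom1 : ∀ a : Fin n → ℕ, (∑ i, a i) = 1 →
      ∫ x : Fin n → ℝ, (∏ i, x i ^ a i) * Φ x = 0) :
    (∫ x : Fin n → ℝ, Kkernel Φ k x = 1) ∧
    (∀ a : Fin n → ℕ, 1 ≤ ∑ i, a i → (∑ i, a i) ≤ 2 * k - 1 →
      ∫ x : Fin n → ℝ, (∏ i, x i ^ a i) * Kkernel Φ k x = 0) := by
  obtain ⟨M, hM⟩ := hbd
  have hΦ : Integrable Φ := hsupp.integrable_of_bounded hmeas.aestronglyMeasurable hM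
  have hK : ∀ a : Fin n → ℕ, ∑ i, a i < 2 * k →
      ∫ x, (∏ i, x i ^ a i) * Kkernel Φ k x = if a = 0 then 1 else 0 :=
    fun a => integral_monomial_mul_Kkernel_of_sum_lt hΦ hsupp hint hmom1
  refine ⟨by simpa using hK 0 (by simp; omega), fun a ha₁ ha₂ => ?_⟩
  have ha : a ≠ 0 := by rintro rfl; simp at ha₁
  simpa [ha] using hK a (by omega)
end

section
/- Polar coordinates for non-isotropic dilations in a special case: for P = diag(1,2) on ℝ², δ_t = diag(t,t²), γ = 3, and every f ∈ L¹(ℝ²), ∫_{ℝ²} f(x)dx = ∫₀^∞ ∫_{S¹} f(δ_t θ) t^{γ−1} s(θ) dσ(θ) dt, where s(θ) = θ₁² + 2θ₂² for θ = (θ₁,θ₂) ∈ S¹. -/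
/-! With `δ_t (x, y) = (t x, t² y)`, the map `(t, u) ↦ δ_t (cos u, sin u)` is injective on
`(0, ∞) × (-π, π)` with image the plane minus the closed negative `x`-axis, a null set: for
`δ_t θ = (x, y)` with `|θ| = 1` one has `t⁴ = x² t² + y²`, whose positive root is unique, and then
`θ = (x / t, y / t²)`. Its Jacobian determinant is `t² (cos² u + 2 sin² u)`, so the theorem is the
change of variables formula followed by Fubini and the `2π`-periodicity in `u`. -/

open MeasureTheory Real Set

noncomputable section

def parabolicDilation (t : ℝ) (q : ℝ × ℝ) : ℝ × ℝ := (t * q.1, t ^ 2 * q.2)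

theorem pow_four_eq_of_parabolicDilation_eq {t : ℝ} {a q : ℝ × ℝ} (ha : a.1 ^ 2 + a.2 ^ 2 = 1)
    (h : parabolicDilation t a = q) : t ^ 4 = t ^ 2 * q.1 ^ 2 + q.2 ^ 2 := by
  subst h
  simp only [parabolicDilation]
  linear_combination (-t ^ 4) * ha

theorem parabolicDilation_inj_of_sq_add_sq_eq_one {t s : ℝ} (ht : 0 < t) (hs : 0 < s)
    {a b : ℝ × ℝ} (ha : a.1 ^ 2 + a.2 ^ 2 = 1) (hb : b.1 ^ 2 + b.2 ^ 2 = 1)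
    (h : parabolicDilation t a = parabolicDilation s b) : t = s ∧ a = b := by
  have ht4 := pow_four_eq_of_parabolicDilation_eq ha h
  have hs4 := pow_four_eq_of_parabolicDilation_eq hb (t := s) rfl
  have hx : (parabolicDilation s b).1 ^ 2 ≤ t ^ 2 := by
    rw [← h]; simp only [parabolicDilation]; nlinarith [sq_nonneg a.2, sq_nonneg t]
  have hfactor : (t ^ 2 - s ^ 2) * (t ^ 2 + s ^ 2 - (parabolicDilation s b).1 ^ 2) = 0 := by
    linear_combination ht4 - hs4
  have hts : t = s := by
    have : t ^ 2 = s ^ 2 := by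
      rcases mul_eq_zero.1 hfactor with h' | h'
      · linarith
      · nlinarith
    exact (pow_left_inj₀ ht.le hs.le two_ne_zero).1 this
  subst hts
  obtain ⟨h1, h2⟩ := Prod.mk.inj h
  exact ⟨rfl, Prod.ext (mul_left_cancel₀ ht.ne' h1) (mul_left_cancel₀ (by positivity) h2)⟩

theorem exists_parabolicDilation_eq {q : ℝ × ℝ} (hq : q ≠ 0) :
    ∃ t > 0, ∃ a : ℝ × ℝ, a.1 ^ 2 + a.2 ^ 2 = 1 ∧ parabolicDilation t a = q := by
  set R := √(q.1 ^ 4 + 4 * q.2 ^ 2)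
  have hR : R ^ 2 = q.1 ^ 4 + 4 * q.2 ^ 2 := sq_sqrt (by positivity)
  have hT : 0 < (q.1 ^ 2 + R) / 2 := by
    have hq' : q.1 ≠ 0 ∨ q.2 ≠ 0 := by
      by_contra! h
      exact hq (Prod.ext h.1 h.2)
    rcases hq' with h | h
    · have := sq_pos_of_ne_zero h
      linarith [sqrt_nonneg (q.1 ^ 4 + 4 * q.2 ^ 2)]
    · have : 0 < R := sqrt_pos.2 (by positivity)
      linarith [sq_nonneg q.1]
  set t := √((q.1 ^ 2 + R) / 2)
  have ht : 0 < t := sqrt_pos.2 hT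
  have ht2 : t ^ 2 = (q.1 ^ 2 + R) / 2 := sq_sqrt hT.le
  refine ⟨t, ht, (q.1 / t, q.2 / t ^ 2), ?_, ?_⟩
  · field_simp
    rw [show t ^ 4 = (t ^ 2) ^ 2 by ring, ht2]
    linear_combination (-1 / 4) * hR
  · ext <;> simp only [parabolicDilation] <;> field_simp

theorem parabolicDilation_mem_polarCoord_source_iff {t : ℝ} (ht : 0 < t) {q : ℝ × ℝ} :
    parabolicDilation t q ∈ polarCoord.source ↔ q ∈ polarCoord.source := by
  simp [parabolicDilation, polarCoord_source, ht, ht.ne', mul_pos_iff_of_pos_left]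

def parabolicPolarCoordSymm (p : ℝ × ℝ) : ℝ × ℝ := parabolicDilation p.1 (cos p.2, sin p.2)

def fderivParabolicPolarCoordSymm (p : ℝ × ℝ) : ℝ × ℝ →L[ℝ] ℝ × ℝ :=
  (Matrix.toLin (.finTwoProd ℝ) (.finTwoProd ℝ)
    !![cos p.2, -p.1 * sin p.2; 2 * p.1 * sin p.2, p.1 ^ 2 * cos p.2]).toContinuousLinearMap

theorem hasFDerivAt_parabolicPolarCoordSymm (p : ℝ × ℝ) :
    HasFDerivAt parabolicPolarCoordSymm (fderivParabolicPolarCoordSymm p) p := by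
  unfold fderivParabolicPolarCoordSymm
  rw [Matrix.toLin_finTwoProd_toContinuousLinearMap]
  refine (HasFDerivAt.prodMk (𝕜 := ℝ)
      (hasFDerivAt_fst.mul ((hasDerivAt_cos p.2).comp_hasFDerivAt p hasFDerivAt_snd))
      ((hasFDerivAt_fst.pow 2).mul ((hasDerivAt_sin p.2).comp_hasFDerivAt p hasFDerivAt_snd))
      ).congr_fderiv ?_
  ext <;> simp [mul_comm]

theorem abs_det_fderivParabolicPolarCoordSymm (p : ℝ × ℝ) :
    |(fderivParabolicPolarCoordSymm p).det| = p.1 ^ 2 * (cos p.2 ^ 2 + 2 * sin p.2 ^ 2) := by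
  have hdet : (fderivParabolicPolarCoordSymm p).det = p.1 ^ 2 * (cos p.2 ^ 2 + 2 * sin p.2 ^ 2) := by
    simp only [fderivParabolicPolarCoordSymm, LinearMap.det_toContinuousLinearMap,
      LinearMap.det_toLin, Matrix.det_fin_two_of]
    ring
  rw [hdet, abs_of_nonneg (by positivity)]

theorem injOn_parabolicPolarCoordSymm : InjOn parabolicPolarCoordSymm polarCoord.target := by
  rintro ⟨t, u⟩ ⟨ht, hu⟩ ⟨s, v⟩ ⟨hs, hv⟩ h
  obtain ⟨rfl, hcs⟩ := parabolicDilation_inj_of_sq_add_sq_eq_one ht hs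
    (cos_sq_add_sin_sq u) (cos_sq_add_sin_sq v) h
  obtain ⟨hcos, hsin⟩ := Prod.mk.inj hcs
  exact polarCoord.symm.injOn ⟨ht, hu⟩ ⟨hs, hv⟩ (by simp [hcos, hsin])

theorem parabolicPolarCoordSymm_image_target :
    parabolicPolarCoordSymm '' polarCoord.target = polarCoord.source := by
  apply Subset.antisymm
  · rintro _ ⟨⟨t, u⟩, ⟨ht, hu⟩, rfl⟩
    rw [parabolicPolarCoordSymm, parabolicDilation_mem_polarCoord_source_iff ht]
    simpa using polarCoord.symm.map_source (x := (1, u)) ⟨mem_Ioi.2 one_pos, hu⟩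
  · intro q hq
    have hq0 : q ≠ 0 := by rintro rfl; simp [polarCoord_source] at hq
    obtain ⟨t, ht, a, ha, rfl⟩ := exists_parabolicDilation_eq hq0
    rw [parabolicDilation_mem_polarCoord_source_iff ht] at hq
    obtain ⟨θ, hθ⟩ : ∃ θ, polarCoord a = (1, θ) := ⟨_, Prod.ext (by simp [ha]) rfl⟩
    have hθ_mem := polarCoord.map_source hq
    have hinv := polarCoord.left_inv hq
    rw [hθ] at hθ_mem hinv
    refine ⟨(t, θ), ⟨ht, hθ_mem.2⟩, ?_⟩
    rw [← hinv]
    simp [parabolicPolarCoordSymm]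

variable {E : Type*} [NormedAddCommGroup E] [NormedSpace ℝ E]

theorem integral_comp_parabolicPolarCoordSymm (f : ℝ × ℝ → E) :
    ∫ p in polarCoord.target, (p.1 ^ 2 * (cos p.2 ^ 2 + 2 * sin p.2 ^ 2)) •
      f (parabolicPolarCoordSymm p) = ∫ p, f p := by
  rw [← setIntegral_univ (f := f), ← setIntegral_congr_set polarCoord_source_ae_eq_univ,
    ← parabolicPolarCoordSymm_image_target,
    integral_image_eq_integral_abs_det_fderiv_smul volume polarCoord.open_target.measurableSet
      (fun p _ ↦ (hasFDerivAt_parabolicPolarCoordSymm p).hasFDerivWithinAt)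
      injOn_parabolicPolarCoordSymm]
  simp_rw [abs_det_fderivParabolicPolarCoordSymm]

theorem integrableOn_comp_parabolicPolarCoordSymm {f : ℝ × ℝ → E}
    (hf : Integrable f) :
    IntegrableOn (fun p ↦ (p.1 ^ 2 * (cos p.2 ^ 2 + 2 * sin p.2 ^ 2)) •
      f (parabolicPolarCoordSymm p)) polarCoord.target := by
  have hsource : IntegrableOn f (parabolicPolarCoordSymm '' polarCoord.target) := by
    rw [parabolicPolarCoordSymm_image_target]
    exact hf.integrableOn
  rw [integrableOn_image_iff_integrableOn_abs_det_fderiv_smul volume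
    polarCoord.open_target.measurableSet
    (fun p _ ↦ (hasFDerivAt_parabolicPolarCoordSymm p).hasFDerivWithinAt)
    injOn_parabolicPolarCoordSymm] at hsource
  simpa only [abs_det_fderivParabolicPolarCoordSymm] using hsource

theorem Function.Periodic.setIntegral_Ioo_eq_intervalIntegral {g : ℝ → E} {T : ℝ}
    (hg : Function.Periodic g T) (hT : 0 ≤ T) (a : ℝ) :
    ∫ u in Ioo a (a + T), g u = ∫ u in 0..T, g u := by
  rw [← integral_Ioc_eq_integral_Ioo, ← intervalIntegral.integral_of_le (by linarith),
    hg.intervalIntegral_add_eq a 0, zero_add]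

end

/-- Polar coordinates for the non-isotropic dilations `δ_t = diag(t, t²)` on `ℝ²`
(`γ = trace P = 3`): for every integrable `f`,
`∫_{ℝ²} f = ∫₀^∞ ∫_{S¹} f(δ_t θ) t^{γ-1} s(θ) dσ(θ) dt` with
`s(θ) = θ₁² + 2θ₂²`, the circle being parametrized by arc length. -/
theorem parabolic_polar_coordinates (f : ℝ × ℝ → ℝ)
    (hf : Integrable f (volume : Measure (ℝ × ℝ))) :
    ∫ x : ℝ × ℝ, f x =
      ∫ t in Set.Ioi (0 : ℝ), ∫ u in (0 : ℝ)..(2 * Real.pi),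
        f (t * Real.cos u, t ^ 2 * Real.sin u) *
          (t ^ (3 - 1 : ℕ) * ((Real.cos u) ^ 2 + 2 * (Real.sin u) ^ 2)) := by
  have hint := integrableOn_comp_parabolicPolarCoordSymm hf
  rw [polarCoord_target, Measure.volume_eq_prod] at hint
  rw [← integral_comp_parabolicPolarCoordSymm, polarCoord_target, Measure.volume_eq_prod,
    setIntegral_prod _ hint]
  refine setIntegral_congr_fun measurableSet_Ioi fun t _ ↦ ?_
  have hper : Function.Periodic (fun u ↦ f (t * cos u, t ^ 2 * sin u) *
      (t ^ (3 - 1 : ℕ) * (cos u ^ 2 + 2 * sin u ^ 2))) (2 * π) := fun u ↦ by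
    simp [cos_add_two_pi, sin_add_two_pi]
  rw [← hper.setIntegral_Ioo_eq_intervalIntegral two_pi_pos.le (-π), neg_add_eq_sub,
    two_mul, add_sub_cancel_right]
  refine setIntegral_congr_fun measurableSet_Ioo fun u _ ↦ ?_
  simp only [parabolicPolarCoordSymm, parabolicDilation, smul_eq_mul]
  ring
end
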